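/- arXiv:1311.1085 — 2 statements merged into one kernel-verified Lean document; each statement's English description precedes it below -/
import Mathlib

section
/- The quotient κ = L/K is a finite-dimensional F-vector space, and dim_F κ ≤ dim_F A_j for every j ∈ ℤ. (This is the algebraic content of the paper's Proposition that the invariant κ(K,h) of a strongly invertible knot is a finite-dimensional graded vector space.) -/
/-- The inverse limit of a `ℤ`-indexed inverse system of `F`-vector spaces,
realised as the subspace of the product consisting of compatible sequences. -/
def invLim (F : Type*) [Field F] (A : ℤ → Type*) [∀ j, AddCommGroup (A j)]
    [∀ j, Module F (A j)] (f : ∀ j : ℤ, A (j + 1) →ₗ[F] A j) :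
    Submodule F (∀ j, A j) where
  carrier := {x | ∀ j, f j (x (j + 1)) = x j}
  add_mem' := by
    intro a b ha hb j
    simp only [Pi.add_apply, map_add, ha j, hb j]
  zero_mem' := by
    intro j
    simp
  smul_mem' := by
    intro c x hx j
    simp only [Pi.smul_apply, map_smul, hx j]

/-- The `j`-th coordinate projection out of the inverse limit. -/
def invLimProj (F : Type*) [Field F] (A : ℤ → Type*) [∀ j, AddCommGroup (A j)]
    [∀ j, Module F (A j)] (f : ∀ j : ℤ, A (j + 1) →ₗ[F] A j) (j : ℤ) :
    invLim F A f →ₗ[F] A j :=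
  (LinearMap.proj j).comp (invLim F A f).subtype

/-- The subspace of the inverse limit consisting of the sequences that vanish
for all sufficiently negative indices. -/
def vanishSub (F : Type*) [Field F] (A : ℤ → Type*) [∀ j, AddCommGroup (A j)]
    [∀ j, Module F (A j)] (f : ∀ j : ℤ, A (j + 1) →ₗ[F] A j) :
    Submodule F (invLim F A f) where
  carrier := {x | ∃ N : ℤ, ∀ j ≤ N, (x : ∀ k, A k) j = 0}
  add_mem' := by
    rintro a b ⟨N, hN⟩ ⟨M, hM⟩
    refine ⟨min N M, fun j hj => ?_⟩
    have h1 := hN j (hj.trans (min_le_left N M))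
    have h2 := hM j (hj.trans (min_le_right N M))
    show (a : ∀ k, A k) j + (b : ∀ k, A k) j = 0
    rw [h1, h2, add_zero]
  zero_mem' := ⟨0, fun j _ => rfl⟩
  smul_mem' := by
    rintro c a ⟨N, hN⟩
    refine ⟨N, fun j hj => ?_⟩
    show c • (a : ∀ k, A k) j = 0
    rw [hN j hj, smul_zero]

lemma ker_le_vanish (F : Type*) [Field F] (A : ℤ → Type*) [∀ j, AddCommGroup (A j)]
    [∀ j, Module F (A j)] (f : ∀ j : ℤ, A (j + 1) →ₗ[F] A j) (j : ℤ) :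
    LinearMap.ker (invLimProj F A f j) ≤ vanishSub F A f := by
  intro x hx
  have hxj : (x : ∀ k, A k) j = 0 := hx
  have key : ∀ n : ℕ, (x : ∀ k, A k) (j - n) = 0 := by
    intro n
    induction n with
    | zero => have h0 : j - ((0:ℕ):ℤ) = j := by simp
              rw [h0]; exact hxj

    | succ n ih =>
      have hcomp := x.2 (j - (n + 1))
      have harg : (j - (n + 1) : ℤ) + 1 = j - n := by ring
      rw [show ((n + 1 : ℕ) : ℤ) = (n : ℤ) + 1 by push_cast; ring] at *
      rw [← hcomp]
      have : (x : ∀ k, A k) (j - ((n : ℤ) + 1) + 1) = 0 := by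
        rw [harg]; exact ih
      rw [this, map_zero]
  refine ⟨j, fun k hk => ?_⟩
  have : k = j - ((j - k).toNat : ℤ) := by
    rw [Int.toNat_of_nonneg (by omega)]; ring
  rw [this]; exact key _

lemma aux_bound (F : Type*) [Field F] (A : ℤ → Type*) [∀ j, AddCommGroup (A j)]
    [∀ j, Module F (A j)] [∀ j, FiniteDimensional F (A j)]
    (f : ∀ j : ℤ, A (j + 1) →ₗ[F] A j) (j : ℤ) :
    FiniteDimensional F (↥(invLim F A f) ⧸ vanishSub F A f) ∧
      Module.finrank F (↥(invLim F A f) ⧸ vanishSub F A f) ≤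
        Module.finrank F (A j) := by
  set π := invLimProj F A f j
  have hker := ker_le_vanish F A f j
  -- L ⧸ ker π ≅ range π
  let e := π.quotKerEquivRange
  have hfin1 : FiniteDimensional F (↥(invLim F A f) ⧸ LinearMap.ker π) :=
    Module.Finite.equiv e.symm
  -- surjection L ⧸ ker π → L ⧸ K
  let g : (↥(invLim F A f) ⧸ LinearMap.ker π) →ₗ[F]
      (↥(invLim F A f) ⧸ vanishSub F A f) :=
    Submodule.mapQ _ _ LinearMap.id (by simpa using hker)
  have hg : Function.Surjective g := by
    intro y
    obtain ⟨x, rfl⟩ := Submodule.mkQ_surjective (vanishSub F A f) y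
    exact ⟨Submodule.mkQ _ x, rfl⟩
  have hfin : FiniteDimensional F (↥(invLim F A f) ⧸ vanishSub F A f) :=
    Module.Finite.of_surjective g hg
  refine ⟨hfin, ?_⟩
  calc Module.finrank F (↥(invLim F A f) ⧸ vanishSub F A f)
      = Module.finrank F (LinearMap.range g) := by
        rw [LinearMap.range_eq_top.mpr hg, finrank_top]
    _ ≤ Module.finrank F (↥(invLim F A f) ⧸ LinearMap.ker π) :=
        g.finrank_range_le
    _ = Module.finrank F (LinearMap.range π) := e.finrank_eq
    _ ≤ Module.finrank F (A j) := Submodule.finrank_le _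

/-- The quotient `κ = L/K` is a finite-dimensional `F`-vector
space, and its dimension is at most `dim_F (A j)` for every `j ∈ ℤ`. -/
theorem statement3 (F : Type*) [Field F] (A : ℤ → Type*) [∀ j, AddCommGroup (A j)]
    [∀ j, Module F (A j)] [∀ j, FiniteDimensional F (A j)]
    (f : ∀ j : ℤ, A (j + 1) →ₗ[F] A j) :
    FiniteDimensional F (↥(invLim F A f) ⧸ vanishSub F A f) ∧
      ∀ j : ℤ, Module.finrank F (↥(invLim F A f) ⧸ vanishSub F A f) ≤
        Module.finrank F (A j) := by
  exact ⟨(aux_bound F A f 0).1, fun j => (aux_bound F A f j).2⟩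
end

section
/- Suppose M, N ∈ ℤ with M + 1 ≤ N, the map f_i : A_{i+1} → A_i is surjective for every i ≥ N, and f_j : A_{j+1} → A_j is injective for every j ≤ M. Then the quotient κ = L/K is isomorphic as an F-vector space to the image of the composite F_{M+1,N} = f_{M+1} ∘ ⋯ ∘ f_{N-1} : A_N → A_{M+1} (and to A_N itself when M + 1 = N). (This is precisely the finite computation the paper carries out to determine its invariant from finitely many Khovanov homology groups, e.g. for torus knots.) -/
open Function

section InverseLimit

variable {F : Type*} [Field F] {A : ℤ → Type*} [∀ j, AddCommGroup (A j)] [∀ j, Module F (A j)]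
  {f : ∀ j : ℤ, A (j + 1) →ₗ[F] A j}

@[simp]
lemma invLimProj_apply (j : ℤ) (x : invLim F A f) : invLimProj F A f j x = (x : ∀ k, A k) j :=
  rfl

lemma invLim_coord_eq_zero_of_le {x : invLim F A f} {i j : ℤ} (hji : j ≤ i)
    (hx : (x : ∀ k, A k) i = 0) : (x : ∀ k, A k) j = 0 := by
  induction i, hji using Int.leInduction with
  | base => exact hx
  | succ i _ ih => exact ih (by rw [← x.2 i, hx, map_zero])

lemma invLim_coord_eq_zero_of_injective {x : invLim F A f} {i j : ℤ} (hji : j ≤ i)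
    (hinj : ∀ k, k < i → Injective (f k)) (hx : (x : ∀ k, A k) j = 0) :
    (x : ∀ k, A k) i = 0 := by
  induction i, hji using Int.leInduction with
  | base => exact hx
  | succ i _ ih =>
    refine hinj i (lt_add_one i) ?_
    rw [x.2 i, ih fun k hk => hinj k (hk.trans (lt_add_one i)), map_zero]

lemma ker_invLimProj (i : ℤ) (hinj : ∀ j < i, Injective (f j)) :
    LinearMap.ker (invLimProj F A f i) = vanishSub F A f := by
  ext x
  constructor
  · exact fun hx => ⟨i, fun j hj => invLim_coord_eq_zero_of_le hj hx⟩
  · rintro ⟨n, hn⟩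
    exact invLim_coord_eq_zero_of_injective (min_le_right n i) hinj (hn _ (min_le_left n i))

lemma exists_compatible_of_surjective {N : ℤ} (hsurj : ∀ i, N ≤ i → Surjective (f i)) (a : A N) :
    ∃ y : ∀ k, A k, y N = a ∧ ∀ k, N ≤ k → f k (y (k + 1)) = y k := by
  refine ⟨fun k => Int.inductionOn' (motive := A) k N a
    (fun i hi y => surjInv (hsurj i hi) y) (fun _ _ _ => 0), Int.inductionOn'_self, fun k hk => ?_⟩
  dsimp only
  rw [Int.inductionOn'_add_one hk]
  exact surjInv_eq _ _

section Composite

variable {Fc : ∀ j i : ℤ, j ≤ i → (A i →ₗ[F] A j)}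

lemma composite_apply_coord (hFid : ∀ j : ℤ, Fc j j le_rfl = LinearMap.id)
    (hFsucc : ∀ (j i : ℤ) (h : j ≤ i),
      Fc j (i + 1) (h.trans (lt_add_one i).le) = (Fc j i h).comp (f i))
    (x : invLim F A f) {j i : ℤ} (h : j ≤ i) : Fc j i h ((x : ∀ k, A k) i) = (x : ∀ k, A k) j := by
  induction i, h using Int.leInduction with
  | base => rw [hFid]; rfl
  | succ i h ih => rw [hFsucc j i h, LinearMap.comp_apply, x.2 i, ih]

lemma composite_eq_comp_succ (hFid : ∀ j : ℤ, Fc j j le_rfl = LinearMap.id)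
    (hFsucc : ∀ (j i : ℤ) (h : j ≤ i),
      Fc j (i + 1) (h.trans (lt_add_one i).le) = (Fc j i h).comp (f i))
    {j i : ℤ} (h : j + 1 ≤ i) :
    Fc j i ((lt_add_one j).le.trans h) = (f j).comp (Fc (j + 1) i h) := by
  induction i, h using Int.leInduction with
  | base => rw [hFsucc j j le_rfl, hFid, hFid, LinearMap.id_comp, LinearMap.comp_id]
  | succ i h ih => rw [hFsucc j i (by omega), ih, hFsucc (j + 1) i h, LinearMap.comp_assoc]

lemma invLimProj_surjective (hFid : ∀ j : ℤ, Fc j j le_rfl = LinearMap.id)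
    (hFsucc : ∀ (j i : ℤ) (h : j ≤ i),
      Fc j (i + 1) (h.trans (lt_add_one i).le) = (Fc j i h).comp (f i))
    {N : ℤ} (hsurj : ∀ i, N ≤ i → Surjective (f i)) :
    Surjective (invLimProj F A f N) := by
  intro a
  obtain ⟨y, hyN, hy⟩ := exists_compatible_of_surjective hsurj a
  refine ⟨⟨fun j => if h : j ≤ N then Fc j N h a else y j, fun j => ?_⟩, by simp [hFid]⟩
  rcases lt_trichotomy j N with hj | rfl | hj
  · simp only [dif_pos hj.le, dif_pos (show j + 1 ≤ N by omega)]
    rw [composite_eq_comp_succ hFid hFsucc (show j + 1 ≤ N by omega), LinearMap.comp_apply]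
  · simp [hFid, ← hyN, hy j le_rfl]
  · simp only [dif_neg hj.not_ge, dif_neg (show ¬ j + 1 ≤ N by omega)]
    exact hy j hj.le

lemma range_invLimProj (hFid : ∀ j : ℤ, Fc j j le_rfl = LinearMap.id)
    (hFsucc : ∀ (j i : ℤ) (h : j ≤ i),
      Fc j (i + 1) (h.trans (lt_add_one i).le) = (Fc j i h).comp (f i))
    {j N : ℤ} (h : j ≤ N) (hsurj : ∀ i, N ≤ i → Surjective (f i)) :
    LinearMap.range (invLimProj F A f j) = LinearMap.range (Fc j N h) := by
  have hcomp : invLimProj F A f j = (Fc j N h).comp (invLimProj F A f N) :=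
    LinearMap.ext fun x => (composite_apply_coord hFid hFsucc x h).symm
  rw [hcomp, LinearMap.range_comp_of_range_eq_top _
    (LinearMap.range_eq_top.2 (invLimProj_surjective hFid hFsucc hsurj))]

end Composite

noncomputable def quotVanishSubEquivRange (i : ℤ) (hinj : ∀ j < i, Injective (f j)) :
    (invLim F A f ⧸ vanishSub F A f) ≃ₗ[F] LinearMap.range (invLimProj F A f i) :=
  (Submodule.quotEquivOfEq _ _ (ker_invLimProj i hinj).symm).trans
    (invLimProj F A f i).quotKerEquivRange

end InverseLimit

/-- If `M + 1 ≤ N`, the maps `f i` are surjective for all `i ≥ N`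
and injective for all `j ≤ M`, then `κ = L/K` is isomorphic to the image of the
composite `F_{M+1,N} : A N → A (M+1)` (and to `A N` itself when `M + 1 = N`). -/
theorem statement7 (F : Type*) [Field F] (A : ℤ → Type*) [∀ j, AddCommGroup (A j)]
    [∀ j, Module F (A j)]
    (f : ∀ j : ℤ, A (j + 1) →ₗ[F] A j)
    (Fc : ∀ j i : ℤ, j ≤ i → (A i →ₗ[F] A j))
    (hFid : ∀ j : ℤ, Fc j j le_rfl = LinearMap.id)
    (hFsucc : ∀ (j i : ℤ) (h : j ≤ i),
      Fc j (i + 1) (h.trans (by omega)) = (Fc j i h).comp (f i))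
    (M N : ℤ) (hMN : M + 1 ≤ N)
    (hsurj : ∀ i, N ≤ i → Function.Surjective (f i))
    (hinj : ∀ j ≤ M, Function.Injective (f j)) :
    Nonempty ((↥(invLim F A f) ⧸ vanishSub F A f) ≃ₗ[F]
        ↥(LinearMap.range (Fc (M + 1) N hMN))) ∧
      (M + 1 = N →
        Nonempty ((↥(invLim F A f) ⧸ vanishSub F A f) ≃ₗ[F] A N)) := by
  have e := (quotVanishSubEquivRange (M + 1) fun j hj => hinj j (by omega)).trans
    (LinearEquiv.ofEq _ _ (range_invLimProj hFid hFsucc hMN hsurj))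
  refine ⟨⟨e⟩, fun hN => ?_⟩
  subst hN
  exact ⟨e.trans (LinearEquiv.ofTop _ (by rw [hFid, LinearMap.range_id]))⟩
end
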